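/- Let A be a continuous matrix-valued function on an interval I, and for s ∈ I let Φ_A(·; s) denote the sum of the Peano–Baker series with base point s. Then for all t, s ∈ I, Φ_A(t; s) is invertible with inverse (Φ_A(t; s))⁻¹ = Φ_A(s; t). -/

import Mathlib

/-!
Both `u ↦ Φ_A(u; s)` and `u ↦ Φ_A(u; t) Φ_A(t; s)` solve the linear equation `X' = A X` and agree
at `u = t`, so by uniqueness of solutions (Gronwall) `Φ_A(u; t) Φ_A(t; s) = Φ_A(u; s)`; at `u = s`
this reads `Φ_A(s; t) Φ_A(t; s) = Φ_A(s; s) = 1`. The differential equation follows by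
differentiating the series termwise, which the bound `‖I_n(u; s)‖ ≤ (C |u - s|)ⁿ / n!` justifies.
Only the values of `A` on the segment between `s` and `t` matter, so `A` may be replaced by a
bounded continuous extension to all of `ℝ` of its restriction to that segment.
-/

attribute [local instance] Matrix.normedAddCommGroup Matrix.normedSpace

/-- The iterated Peano–Baker integrals with base point `t₀`: `pbIter A t₀ 0 = 1` (identity
matrix) and `pbIter A t₀ (n+1) t = ∫_{t₀}^t A τ * pbIter A t₀ n τ dτ`. -/
noncomputable def pbIter {d : ℕ} (A : ℝ → Matrix (Fin d) (Fin d) ℝ) (t₀ : ℝ) :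
    ℕ → ℝ → Matrix (Fin d) (Fin d) ℝ
  | 0 => fun _ => 1
  | n + 1 => fun t => ∫ τ in t₀..t, A τ * pbIter A t₀ n τ

open Set Metric Bornology intervalIntegral
open scoped NNReal Nat

namespace Matrix

variable {n α : Type*} [Fintype n] [NormedRing α]

theorem norm_mul_le_card_mul (X Y : Matrix n n α) :
    ‖X * Y‖ ≤ Fintype.card n * ‖X‖ * ‖Y‖ := by
  refine (norm_le_iff (by positivity)).2 fun i j => ?_
  calc ‖(X * Y) i j‖ ≤ ∑ k, ‖X i k‖ * ‖Y k j‖ :=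
        (norm_sum_le _ _).trans (Finset.sum_le_sum fun k _ => norm_mul_le _ _)
    _ ≤ ∑ _k : n, ‖X‖ * ‖Y‖ := by
        gcongr <;> exact norm_entry_le_entrywise_sup_norm _
    _ = Fintype.card n * ‖X‖ * ‖Y‖ := by simp [mul_assoc]

theorem norm_one_le [DecidableEq n] [NormOneClass α] : ‖(1 : Matrix n n α)‖ ≤ 1 :=
  (norm_le_iff zero_le_one).2 fun i j => by
    rw [one_apply]
    split_ifs <;> simp

theorem exists_lipschitzWith_mul_left {ι : Type*} {B : ι → Matrix n n α}
    (hB : IsBounded (range B)) : ∃ C, ∀ i, LipschitzWith C (B i * ·) := by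
  obtain ⟨M, hM⟩ := isBounded_iff_forall_norm_le.1 hB
  refine ⟨Fintype.card n * M.toNNReal, fun i => LipschitzWith.of_dist_le_mul fun X Y => ?_⟩
  rw [dist_eq_norm, dist_eq_norm, ← mul_sub]
  refine (norm_mul_le_card_mul _ _).trans ?_
  push_cast
  gcongr
  exact (hM _ (mem_range_self i)).trans (le_max_left _ _)

end Matrix

theorem HasDerivAt.matrix_mul_const {n : Type*} [Fintype n] {F : ℝ → Matrix n n ℝ}
    {F' : Matrix n n ℝ} {x : ℝ} (hF : HasDerivAt F F' x) (M : Matrix n n ℝ) :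
    HasDerivAt (fun y => F y * M) (F' * M) x :=
  (LinearMap.mulRight ℝ M).toContinuousLinearMap.hasFDerivAt.comp_hasDerivAt x hF

theorem abs_integral_abs_sub_pow (a b : ℝ) (n : ℕ) :
    |∫ τ in a..b, |τ - a| ^ n| = |b - a| ^ (n + 1) / (n + 1) := by
  rcases le_total a b with hab | hba
  · have h : EqOn (fun τ => |τ - a| ^ n) (fun τ => (τ - a) ^ n) (uIcc a b) := fun τ hτ => by
      rw [uIcc_of_le hab] at hτ
      simp only [abs_of_nonneg (sub_nonneg.2 hτ.1)]
    rw [integral_congr h, integral_comp_sub_right (fun x => x ^ n), integral_pow]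
    simp [abs_of_nonneg (sub_nonneg.2 hab), abs_div, abs_of_pos (Nat.cast_add_one_pos (α := ℝ) n)]
  · have h : EqOn (fun τ => |τ - a| ^ n) (fun τ => (a - τ) ^ n) (uIcc a b) := fun τ hτ => by
      rw [uIcc_of_ge hba] at hτ
      simp only [abs_of_nonpos (sub_nonpos.2 hτ.2), neg_sub]
    rw [integral_congr h, integral_comp_sub_left (fun x => x ^ n), integral_pow]
    simp [abs_of_nonpos (sub_nonpos.2 hba), abs_div, abs_of_nonneg (sub_nonneg.2 hba),
      abs_of_pos (Nat.cast_add_one_pos (α := ℝ) n)]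

/-- `peanoBaker A s t` is `Φ_A(t; s)`. -/
noncomputable def peanoBaker {d : ℕ} (A : ℝ → Matrix (Fin d) (Fin d) ℝ) (s t : ℝ) :
    Matrix (Fin d) (Fin d) ℝ :=
  ∑' n, pbIter A s n t

section PeanoBaker

variable {d : ℕ} {A : ℝ → Matrix (Fin d) (Fin d) ℝ}

theorem pbIter_eqOn {B : ℝ → Matrix (Fin d) (Fin d) ℝ} {J : Set ℝ} [J.OrdConnected]
    (hAB : EqOn A B J) {t₀ : ℝ} (ht₀ : t₀ ∈ J) (n : ℕ) :
    EqOn (pbIter A t₀ n) (pbIter B t₀ n) J := by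
  induction n with
  | zero => exact fun _ _ => rfl
  | succ n ih =>
    intro u hu
    refine integral_congr fun τ hτ => ?_
    have hτJ := OrdConnected.uIcc_subset ‹_› ht₀ hu hτ
    simp only [hAB hτJ, ih hτJ]

theorem peanoBaker_eqOn {B : ℝ → Matrix (Fin d) (Fin d) ℝ} {J : Set ℝ} [J.OrdConnected]
    (hAB : EqOn A B J) {s : ℝ} (hs : s ∈ J) : EqOn (peanoBaker A s) (peanoBaker B s) J :=
  fun _ hu => tsum_congr fun n => pbIter_eqOn hAB hs n hu

theorem peanoBaker_self (s : ℝ) : peanoBaker A s s = 1 := by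
  rw [peanoBaker, tsum_eq_single 0]
  · rfl
  · rintro (_ | n) hn
    · exact absurd rfl hn
    · exact integral_same

theorem continuous_pbIter (hA : Continuous A) (t₀ : ℝ) (n : ℕ) : Continuous (pbIter A t₀ n) := by
  induction n with
  | zero => exact continuous_const
  | succ n ih => exact continuous_primitive (fun _ _ => (hA.matrix_mul ih).intervalIntegrable _ _) t₀

theorem hasDerivAt_pbIter_succ (hA : Continuous A) (t₀ : ℝ) (n : ℕ) (u : ℝ) :
    HasDerivAt (pbIter A t₀ (n + 1)) (A u * pbIter A t₀ n u) u :=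
  ((hA.matrix_mul (continuous_pbIter hA t₀ n)).integral_hasStrictDerivAt t₀ u).hasDerivAt

variable {C : ℝ≥0}

theorem norm_pbIter_le (hC : ∀ τ, LipschitzWith C (A τ * ·)) (t₀ : ℝ) (n : ℕ) (u : ℝ) :
    ‖pbIter A t₀ n u‖ ≤ (C * |u - t₀|) ^ n / n ! := by
  induction n generalizing u with
  | zero => simpa [pbIter] using Matrix.norm_one_le
  | succ n ih =>
    have hbound : ∀ τ, ‖A τ * pbIter A t₀ n τ‖ ≤ C ^ (n + 1) / n ! * |τ - t₀| ^ n := fun τ =>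
      calc ‖A τ * pbIter A t₀ n τ‖ ≤ C * ‖pbIter A t₀ n τ‖ := (hC τ).norm_le_mul (mul_zero _) _
        _ ≤ C * ((C * |τ - t₀|) ^ n / n !) := by gcongr; exact ih τ
        _ = C ^ (n + 1) / n ! * |τ - t₀| ^ n := by ring
    calc ‖∫ τ in t₀..u, A τ * pbIter A t₀ n τ‖
        ≤ |∫ τ in t₀..u, C ^ (n + 1) / n ! * |τ - t₀| ^ n| :=
          norm_integral_le_abs_of_norm_le (.of_forall hbound)
            (by apply Continuous.intervalIntegrable; fun_prop)
      _ = C ^ (n + 1) / n ! * (|u - t₀| ^ (n + 1) / (n + 1)) := by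
          rw [integral_const_mul, abs_mul, abs_integral_abs_sub_pow, abs_of_nonneg (by positivity)]
      _ = (C * |u - t₀|) ^ (n + 1) / (n + 1)! := by
          rw [Nat.factorial_succ]; push_cast; field_simp; ring

theorem summable_pbIter (hC : ∀ τ, LipschitzWith C (A τ * ·)) (t₀ u : ℝ) :
    Summable fun n => pbIter A t₀ n u :=
  .of_norm_bounded (Real.summable_pow_div_factorial _) (norm_pbIter_le hC t₀ · u)

theorem hasDerivAt_peanoBaker (hA : Continuous A) (hC : ∀ τ, LipschitzWith C (A τ * ·))
    (s u : ℝ) : HasDerivAt (peanoBaker A s) (A u * peanoBaker A s u) u := by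
  have hshift : peanoBaker A s = fun x => 1 + ∑' n, pbIter A s (n + 1) x :=
    funext fun x => (summable_pbIter hC s x).tsum_eq_zero_add
  set R := |u - s| + 1
  have hR : u ∈ ball s R := by rw [mem_ball, Real.dist_eq]; linarith
  have hbound : ∀ n, ∀ x ∈ ball s R, ‖A x * pbIter A s n x‖ ≤ C * ((C * R) ^ n / n !) :=
    fun n x hx => calc
      ‖A x * pbIter A s n x‖ ≤ C * ‖pbIter A s n x‖ := (hC x).norm_le_mul (mul_zero _) _
      _ ≤ C * ((C * R) ^ n / n !) := by
        gcongr
        refine (norm_pbIter_le hC s n x).trans ?_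
        rw [mem_ball, Real.dist_eq] at hx
        gcongr
  have hsum := hasDerivAt_tsum_of_isPreconnected
    ((Real.summable_pow_div_factorial (C * R)).mul_left (C : ℝ)) isOpen_ball
    (convex_ball s R).isPreconnected (fun n x _ => hasDerivAt_pbIter_succ hA s n x) hbound hR
    ((summable_nat_add_iff 1).2 (summable_pbIter hC s u)) hR
  rw [peanoBaker, ← (summable_pbIter hC s u).tsum_mul_left, hshift]
  exact hsum.const_add 1

theorem peanoBaker_mul_peanoBaker (hA : Continuous A) (hC : ∀ τ, LipschitzWith C (A τ * ·))
    (s t u : ℝ) : peanoBaker A t u * peanoBaker A s t = peanoBaker A s u := by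
  have hsol := ODE_solution_unique_univ (v := fun τ X => A τ * X) (s := fun _ => univ)
    (f := fun x => peanoBaker A t x * peanoBaker A s t) (g := peanoBaker A s) (t₀ := t)
    (fun τ => (hC τ).lipschitzOnWith)
    (fun x => ⟨by
      rw [← mul_assoc]
      exact (hasDerivAt_peanoBaker hA hC t x).matrix_mul_const (peanoBaker A s t), mem_univ _⟩)
    (fun x => ⟨hasDerivAt_peanoBaker hA hC s x, mem_univ _⟩)
    (by simp only [peanoBaker_self, one_mul])
  exact congrFun hsol u

end PeanoBaker

theorem stmt13_general {d : ℕ} (A : ℝ → Matrix (Fin d) (Fin d) ℝ)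
    (I : Set ℝ) (hI : I.OrdConnected) (hA : ContinuousOn A I) :
    ∀ t ∈ I, ∀ s ∈ I,
      IsUnit (∑' n : ℕ, pbIter A s n t) ∧
      (∑' n : ℕ, pbIter A s n t)⁻¹ = ∑' n : ℕ, pbIter A t n s := by
  intro t ht s hs
  set J := Icc (t ⊓ s) (t ⊔ s)
  have hAJ : Continuous (J.domRestrict A) := (hA.mono (hI.uIcc_subset ht hs)).domRestrict
  set B := IccExtend inf_le_sup (J.domRestrict A)
  have hB : Continuous B := hAJ.Icc_extend'
  have hAB : EqOn A B J := fun τ hτ => (IccExtend_of_mem inf_le_sup (J.domRestrict A) hτ).symm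
  obtain ⟨C, hC⟩ := Matrix.exists_lipschitzWith_mul_left (B := B)
    (by simpa only [B, IccExtend_range] using (isCompact_range hAJ).isBounded)
  have hinv {u v : ℝ} (hu : u ∈ J) (hv : v ∈ J) : peanoBaker A u v * peanoBaker A v u = 1 := by
    rw [peanoBaker_eqOn hAB hu hv, peanoBaker_eqOn hAB hv hu, peanoBaker_mul_peanoBaker hB hC,
      peanoBaker_self]
  have htJ : t ∈ J := left_mem_uIcc
  have hsJ : s ∈ J := right_mem_uIcc
  exact ⟨⟨⟨_, _, hinv hsJ htJ, hinv htJ hsJ⟩, rfl⟩, Matrix.inv_eq_left_inv (hinv htJ hsJ)⟩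

theorem stmt13 {d : ℕ} (hd : 1 ≤ d) (A : ℝ → Matrix (Fin d) (Fin d) ℝ)
    (I : Set ℝ) (hI : I.OrdConnected) (hA : ContinuousOn A I) :
    ∀ t ∈ I, ∀ s ∈ I,
      IsUnit (∑' n : ℕ, pbIter A s n t) ∧
      (∑' n : ℕ, pbIter A s n t)⁻¹ = ∑' n : ℕ, pbIter A t n s :=
  stmt13_general A I hI hA
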